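/- arXiv:2007.06047 — 3 statements merged into one kernel-verified Lean document; each statement's English description precedes it below -/
import Mathlib

section
/- Let A ∈ ℝ^{n×n} be K-monotone, let A = U₁ − V₁ be a K-weak regular splitting of type I and A = U₂ − V₂ be a K-weak regular splitting of type II. If U₁⁻¹ ≥_K U₂⁻¹, then ρ(U₁⁻¹V₁) ≤ ρ(U₂⁻¹V₂) < 1. -/
open Matrix Finset Filter

/-- A proper cone in `ℝ^n`: a closed, pointed, solid convex cone. -/
def IsProperCone {n : ℕ} (K : Set (Fin n → ℝ)) : Prop :=
  IsClosed K ∧ Convex ℝ K ∧ (∀ c : ℝ, 0 ≤ c → ∀ x ∈ K, c • x ∈ K) ∧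
    K ∩ (-K) = {0} ∧ (interior K).Nonempty

/-- `M ≥_K 0`: the matrix `M` leaves the cone `K` invariant. -/
def KNonneg {n : ℕ} (K : Set (Fin n → ℝ)) (M : Matrix (Fin n) (Fin n) ℝ) : Prop :=
  ∀ x ∈ K, M.mulVec x ∈ K

/-- Spectral radius: the supremum of the moduli of the complex eigenvalues. -/
noncomputable def specRad {n : ℕ} (M : Matrix (Fin n) (Fin n) ℝ) : ℝ :=
  sSup ((fun z : ℂ => ‖z‖) '' spectrum ℂ (M.map Complex.ofReal))

/-- `A = U - V` is a `K`-regular splitting. -/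
def KRegularSplitting {n : ℕ} (K : Set (Fin n → ℝ))
    (A U V : Matrix (Fin n) (Fin n) ℝ) : Prop :=
  A = U - V ∧ IsUnit U ∧ KNonneg K U⁻¹ ∧ KNonneg K V

/-- `A = U - V` is a `K`-weak regular splitting of type I. -/
def KWeakRegularSplittingI {n : ℕ} (K : Set (Fin n → ℝ))
    (A U V : Matrix (Fin n) (Fin n) ℝ) : Prop :=
  A = U - V ∧ IsUnit U ∧ KNonneg K U⁻¹ ∧ KNonneg K (U⁻¹ * V)

/-- `A = U - V` is a `K`-weak regular splitting of type II. -/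
def KWeakRegularSplittingII {n : ℕ} (K : Set (Fin n → ℝ))
    (A U V : Matrix (Fin n) (Fin n) ℝ) : Prop :=
  A = U - V ∧ IsUnit U ∧ KNonneg K U⁻¹ ∧ KNonneg K (V * U⁻¹)

/-- `A` is `K`-monotone: invertible with `A⁻¹ ≥_K 0`. -/
def KMonotone {n : ℕ} (K : Set (Fin n → ℝ)) (A : Matrix (Fin n) (Fin n) ℝ) : Prop :=
  IsUnit A ∧ KNonneg K A⁻¹

/-- Two-stage iteration matrix `T_s = (F⁻¹G)^s + Σ_{j=0}^{s-1} (F⁻¹G)^j F⁻¹ V`. -/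
noncomputable def twoStageT {n : ℕ} (F G V : Matrix (Fin n) (Fin n) ℝ) (s : ℕ) :
    Matrix (Fin n) (Fin n) ℝ :=
  (F⁻¹ * G) ^ s + (∑ j ∈ Finset.range s, (F⁻¹ * G) ^ j) * (F⁻¹ * V)

/-- `T̂_s = (GF⁻¹)^s + Σ_{j=0}^{s-1} (GF⁻¹)^j V F⁻¹`. -/
noncomputable def twoStageThat {n : ℕ} (F G V : Matrix (Fin n) (Fin n) ℝ) (s : ℕ) :
    Matrix (Fin n) (Fin n) ℝ :=
  (G * F⁻¹) ^ s + (∑ j ∈ Finset.range s, (G * F⁻¹) ^ j) * (V * F⁻¹)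

/-- `Q_s = Σ_{j=0}^{s-1} (F⁻¹G)^j F⁻¹`. -/
noncomputable def twoStageQ {n : ℕ} (F G : Matrix (Fin n) (Fin n) ℝ) (s : ℕ) :
    Matrix (Fin n) (Fin n) ℝ :=
  (∑ j ∈ Finset.range s, (F⁻¹ * G) ^ j) * F⁻¹

/-!
Both parts rest on one estimate: a closed pointed cone `K` admits a functional `w` with
`δ ‖x‖ ≤ w x` on `K`, and evaluating `w (M u)` at an interior point `u` turns the `K`-order on
matrices into a norm comparison, `0 ≤_K P ≤_K Q → ‖P‖ ≤ c ‖Q‖`, and makes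
`0 ≤_K ∑_{j<m} P_j ≤_K B` force `P_j → 0`.

With `T = U₁⁻¹V₁`, `T' = V₂U₂⁻¹` and `S = U₂⁻¹V₂`, the partial sums of `U₂⁻¹ T'ʲ` are
`A⁻¹ - A⁻¹ T'ᵐ ≤_K A⁻¹`, so `U₂⁻¹ T'ᵐ = Sᵐ U₂⁻¹ → 0` and `ρ(S) < 1`. Moreover
`A⁻¹ T'ᵐ - Tᵐ A⁻¹ = ∑ Tʲ (U₁⁻¹ - U₂⁻¹) T'^(m-1-j) ≥_K 0`, so `‖Tᵐ‖ ≤ c ‖Sᵐ‖`, and Gelfand's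
formula gives `ρ(T) ≤ ρ(S)`.
-/

open Topology
open scoped ENNReal

attribute [local instance] Matrix.linftyOpNormedRing Matrix.linftyOpNormedAlgebra

section SpectralRadius

variable {A : Type*} [NormedRing A] [NormedAlgebra ℂ A] [CompleteSpace A]

theorem spectralRadius_le_nnnorm' (a : A) : spectralRadius ℂ a ≤ ‖a‖₊ := by
  refine le_of_tendsto (spectrum.pow_nnnorm_pow_one_div_tendsto_nhds_spectralRadius a) ?_
  filter_upwards [eventually_ne_atTop 0] with m hm
  calc (‖a ^ m‖₊ : ℝ≥0∞) ^ (1 / m : ℝ) ≤ ((‖a‖₊ : ℝ≥0∞) ^ m) ^ (1 / m : ℝ) := by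
        gcongr
        exact_mod_cast nnnorm_pow_le' a (Nat.pos_of_ne_zero hm)
    _ = ‖a‖₊ := by rw [one_div, ENNReal.pow_rpow_inv_natCast hm]

theorem spectralRadius_lt_one_of_tendsto_norm_pow {a : A}
    (h : Tendsto (fun m => ‖a ^ m‖) atTop (𝓝 0)) : spectralRadius ℂ a < 1 := by
  obtain ⟨m, hm, hm0⟩ := ((h.eventually (gt_mem_nhds one_pos)).and (eventually_ne_atTop 0)).exists
  rw [← pow_lt_one_iff hm0]
  calc spectralRadius ℂ a ^ m ≤ spectralRadius ℂ (a ^ m) := spectrum.spectralRadius_pow_le a m hm0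
    _ ≤ ‖a ^ m‖₊ := spectralRadius_le_nnnorm' _
    _ < 1 := by exact_mod_cast hm

theorem spectralRadius_le_of_norm_pow_le {a b : A} {c : ℝ}
    (h : ∀ m : ℕ, ‖a ^ m‖ ≤ c * ‖b ^ m‖) : spectralRadius ℂ a ≤ spectralRadius ℂ b := by
  set C := max c 1
  have hC : 0 < C := lt_max_of_lt_right one_pos
  have hroot : Tendsto (fun m : ℕ => ENNReal.ofReal (C ^ (1 / m : ℝ))) atTop (𝓝 1) := by
    have := ((Real.continuousAt_const_rpow hC.ne').tendsto.comp
      tendsto_one_div_atTop_nhds_zero_nat)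
    simpa using (ENNReal.tendsto_ofReal this)
  have hb := ENNReal.Tendsto.mul hroot (Or.inl one_ne_zero)
    (spectrum.pow_norm_pow_one_div_tendsto_nhds_spectralRadius b) (Or.inr ENNReal.one_ne_top)
  rw [one_mul] at hb
  refine le_of_tendsto_of_tendsto' (spectrum.pow_norm_pow_one_div_tendsto_nhds_spectralRadius a)
    hb fun m => ?_
  rw [← ENNReal.ofReal_mul (by positivity), ← Real.mul_rpow hC.le (norm_nonneg _)]
  gcongr
  exact (h m).trans (mul_le_mul_of_nonneg_right (le_max_left c 1) (norm_nonneg _))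

end SpectralRadius

section SpecRad

variable {n : ℕ}

theorem specRad_eq_toReal_spectralRadius (M : Matrix (Fin n) (Fin n) ℝ) :
    specRad M = (spectralRadius ℂ (M.map Complex.ofReal)).toReal := by
  rw [spectralRadius, ← sSup_image, ENNReal.toReal_sSup _ (by rintro _ ⟨k, -, rfl⟩; simp),
    Set.image_image]
  simp [specRad]

theorem norm_map_ofReal (M : Matrix (Fin n) (Fin n) ℝ) : ‖M.map Complex.ofReal‖ = ‖M‖ := by
  simp only [← coe_nnnorm, Matrix.linfty_opNNNorm_def, Matrix.map_apply, Complex.nnnorm_real]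

theorem norm_map_ofReal_pow (M : Matrix (Fin n) (Fin n) ℝ) (m : ℕ) :
    ‖M.map Complex.ofReal ^ m‖ = ‖M ^ m‖ := by
  rw [← norm_map_ofReal]
  exact congrArg norm (map_pow Complex.ofRealHom.mapMatrix M m).symm

theorem specRad_le_of_norm_pow_le {M N : Matrix (Fin n) (Fin n) ℝ} {c : ℝ}
    (h : ∀ m : ℕ, ‖M ^ m‖ ≤ c * ‖N ^ m‖) : specRad M ≤ specRad N := by
  rw [specRad_eq_toReal_spectralRadius, specRad_eq_toReal_spectralRadius]
  refine ENNReal.toReal_mono ((spectralRadius_le_nnnorm' _).trans_lt ENNReal.coe_lt_top).ne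
    (spectralRadius_le_of_norm_pow_le (c := c) fun m => ?_)
  simpa only [norm_map_ofReal_pow] using h m

theorem specRad_lt_one_of_tendsto_norm_pow {M : Matrix (Fin n) (Fin n) ℝ}
    (h : Tendsto (fun m => ‖M ^ m‖) atTop (𝓝 0)) : specRad M < 1 := by
  rw [specRad_eq_toReal_spectralRadius]
  refine ENNReal.toReal_lt_of_lt_ofReal ?_
  rw [ENNReal.ofReal_one]
  exact spectralRadius_lt_one_of_tendsto_norm_pow (by simpa only [norm_map_ofReal_pow] using h)

end SpecRad

section ClosedPointedCone

variable {E : Type*} [NormedAddCommGroup E] [NormedSpace ℝ E] {K : Set E}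
  (hclosed : IsClosed K) (hconvex : Convex ℝ K) (hsmul : ∀ c : ℝ, 0 ≤ c → ∀ x ∈ K, c • x ∈ K)
  (hpointed : K ∩ (-K) = {0})
include hclosed hconvex hsmul hpointed

theorem exists_nonneg_functional_pos {x : E} (hx : x ∈ K) (hx0 : x ≠ 0) :
    ∃ g : E →L[ℝ] ℝ, (∀ a ∈ K, 0 ≤ g a) ∧ 0 < g x := by
  have hnx : -x ∉ K := fun h => hx0 <| by
    have hmem : x ∈ K ∩ (-K) := ⟨hx, by simpa using h⟩
    rwa [hpointed] at hmem
  obtain ⟨f, u, hfK, hu⟩ := geometric_hahn_banach_closed_point hconvex hclosed hnx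
  have hu0 : 0 < u := by simpa using hfK 0 (by simpa using hsmul 0 le_rfl x hx)
  -- `f` is bounded above on the cone `K`, so it is nonpositive there
  have hf : ∀ a ∈ K, f a ≤ 0 := fun a ha => by
    by_contra! hpos
    have := hfK _ (hsmul (u / f a) (by positivity) a ha)
    rw [map_smul, smul_eq_mul, div_mul_cancel₀ _ hpos.ne'] at this
    exact lt_irrefl _ this
  refine ⟨-f, fun a ha => by simpa using hf a ha, ?_⟩
  simpa using hu0.trans hu

theorem exists_functional_ge_norm [ProperSpace E] :
    ∃ (w : E →L[ℝ] ℝ) (δ : ℝ), 0 < δ ∧ ∀ x ∈ K, δ * ‖x‖ ≤ w x := by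
  set S := Metric.sphere (0 : E) 1 ∩ K
  have hS : IsCompact S := (isCompact_sphere 0 1).inter_right hclosed
  have hsep : ∀ x ∈ S, ∃ g : E →L[ℝ] ℝ, (∀ a ∈ K, 0 ≤ g a) ∧ 0 < g x := fun x hx =>
    exists_nonneg_functional_pos hclosed hconvex hsmul hpointed hx.2
      (ne_zero_of_mem_unit_sphere ⟨x, hx.1⟩)
  choose! g hgK hgx using hsep
  obtain ⟨t, htS, hcover⟩ := hS.elim_nhds_subcover (fun x => {z | 0 < g x z})
    fun x hx => (isOpen_lt continuous_const (g x).continuous).mem_nhds (hgx x hx)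
  set w := ∑ x ∈ t, g x
  have hwS : ∀ z ∈ S, 0 < w z := fun z hz => by
    obtain ⟨x, hxt, hxz⟩ := Set.mem_iUnion₂.1 (hcover hz)
    rw [_root_.sum_apply]
    exact Finset.sum_pos' (fun y hy => hgK y (htS y hy) z hz.2) ⟨x, hxt, hxz⟩
  obtain ⟨δ, hδ, hδS⟩ := hS.exists_forall_le' w.continuous.continuousOn hwS
  refine ⟨w, δ, hδ, fun x hx => ?_⟩
  rcases eq_or_ne x 0 with rfl | hx0
  · simp
  have hxpos : 0 < ‖x‖ := norm_pos_iff.2 hx0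
  have := hδS (‖x‖⁻¹ • x) ⟨by simp [norm_smul, hxpos.ne'], hsmul _ (by positivity) x hx⟩
  rw [map_smul, smul_eq_mul] at this
  rwa [le_inv_mul_iff₀ hxpos, mul_comm] at this

end ClosedPointedCone

section MatrixCone

variable {n : ℕ} {K : Set (Fin n → ℝ)}

theorem IsProperCone.add_mem (hK : IsProperCone K) {x y : Fin n → ℝ} (hx : x ∈ K) (hy : y ∈ K) :
    x + y ∈ K := by
  have hmid := hK.2.1 hx hy (by norm_num : (0 : ℝ) ≤ 1 / 2) (by norm_num : (0 : ℝ) ≤ 1 / 2)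
    (by norm_num)
  convert hK.2.2.1 2 zero_le_two _ hmid using 1
  module

theorem KNonneg.mul {M N : Matrix (Fin n) (Fin n) ℝ} (hM : KNonneg K M) (hN : KNonneg K N) :
    KNonneg K (M * N) := fun x hx => by
  rw [← mulVec_mulVec]
  exact hM _ (hN x hx)

theorem KNonneg.pow {M : Matrix (Fin n) (Fin n) ℝ} (hM : KNonneg K M) (m : ℕ) :
    KNonneg K (M ^ m) := by
  induction m with
  | zero => exact fun x hx => by rwa [pow_zero, one_mulVec]
  | succ m ih => rw [pow_succ]; exact ih.mul hM

theorem KNonneg.add (hK : IsProperCone K) {M N : Matrix (Fin n) (Fin n) ℝ} (hM : KNonneg K M)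
    (hN : KNonneg K N) : KNonneg K (M + N) := fun x hx => by
  rw [add_mulVec]
  exact hK.add_mem (hM x hx) (hN x hx)

theorem IsProperCone.exists_functional_norm_le (hK : IsProperCone K) :
    ∃ (f : Matrix (Fin n) (Fin n) ℝ →ₗ[ℝ] ℝ) (C C' : ℝ), 0 < C ∧ 0 ≤ C' ∧
      (∀ M, KNonneg K M → ‖M‖ ≤ C * f M) ∧ ∀ M, f M ≤ C' * ‖M‖ := by
  obtain ⟨hclosed, hconvex, hsmul, hpointed, hsolid⟩ := hK
  obtain ⟨w, δ, hδ, hw⟩ := exists_functional_ge_norm hclosed hconvex hsmul hpointed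
  obtain ⟨u, hu⟩ := hsolid
  obtain ⟨ε, hε, hball⟩ :=
    Metric.nhds_basis_closedBall.mem_iff.1 (mem_interior_iff_mem_nhds.1 hu)
  let f : Matrix (Fin n) (Fin n) ℝ →ₗ[ℝ] ℝ :=
    { toFun := fun M => w (M *ᵥ u)
      map_add' := fun M N => by simp [add_mulVec]
      map_smul' := fun c M => by simp [smul_mulVec] }
  refine ⟨f, (δ * ε)⁻¹, ‖w‖ * ‖u‖, by positivity, by positivity, fun M hM => ?_, fun M => ?_⟩
  swap
  · calc w (M *ᵥ u) ≤ ‖w‖ * ‖M *ᵥ u‖ := (le_abs_self _).trans (w.le_opNorm _)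
      _ ≤ ‖w‖ * (‖M‖ * ‖u‖) := by gcongr; exact linfty_opNorm_mulVec M u
      _ = ‖w‖ * ‖u‖ * ‖M‖ := by ring
  have hMu : M *ᵥ u ∈ K := hM u (hball (Metric.mem_closedBall_self hε.le))
  have hfM : 0 ≤ w (M *ᵥ u) := (mul_nonneg hδ.le (norm_nonneg _)).trans (hw _ hMu)
  rw [Matrix.linfty_opNorm_eq_opNorm]
  refine ContinuousLinearMap.opNorm_le_of_unit_norm (mul_nonneg (by positivity) hfM)
    fun x hx => ?_
  have hadd : u + ε • x ∈ K := hball (by simp [norm_smul, hx, abs_of_pos hε])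
  have hsub : u - ε • x ∈ K := hball (by simp [norm_smul, hx, abs_of_pos hε])
  -- the two vectors `M (u ± ε x)` of `K` differ by `2 ε M x` and add up to `2 M u`
  have hdiff : M *ᵥ (u + ε • x) - M *ᵥ (u - ε • x) = (2 * ε) • (M *ᵥ x) := by
    simp only [mulVec_add, mulVec_sub, mulVec_smul]; module
  have key : δ * ((2 * ε) * ‖M *ᵥ x‖) ≤ 2 * w (M *ᵥ u) := calc
    δ * ((2 * ε) * ‖M *ᵥ x‖) = δ * ‖M *ᵥ (u + ε • x) - M *ᵥ (u - ε • x)‖ := by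
      rw [hdiff, norm_smul, Real.norm_of_nonneg (by positivity)]
    _ ≤ δ * ‖M *ᵥ (u + ε • x)‖ + δ * ‖M *ᵥ (u - ε • x)‖ := by
      rw [← mul_add]; gcongr; exact norm_sub_le _ _
    _ ≤ w (M *ᵥ (u + ε • x)) + w (M *ᵥ (u - ε • x)) :=
      add_le_add (hw _ (hM _ hadd)) (hw _ (hM _ hsub))
    _ = 2 * w (M *ᵥ u) := by simp only [mulVec_add, mulVec_sub, map_add, map_sub]; ring
  show ‖M *ᵥ x‖ ≤ (δ * ε)⁻¹ * w (M *ᵥ u)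
  rw [inv_mul_eq_div, le_div_iff₀ (by positivity)]
  linarith

theorem IsProperCone.exists_norm_le_of_KNonneg_sub (hK : IsProperCone K) :
    ∃ c : ℝ, 0 ≤ c ∧ ∀ P Q : Matrix (Fin n) (Fin n) ℝ, KNonneg K P → KNonneg K (Q - P) →
      ‖P‖ ≤ c * ‖Q‖ := by
  obtain ⟨f, C, C', hC, hC', hf, hf'⟩ := hK.exists_functional_norm_le
  refine ⟨C * C', by positivity, fun P Q hP hQP => ?_⟩
  have hfQP : 0 ≤ f Q - f P := by
    rw [← map_sub]
    exact nonneg_of_mul_nonneg_right ((norm_nonneg _).trans (hf _ hQP)) hC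
  calc ‖P‖ ≤ C * f P := hf P hP
    _ ≤ C * (C' * ‖Q‖) := by gcongr; exact (sub_nonneg.1 hfQP).trans (hf' Q)
    _ = C * C' * ‖Q‖ := (mul_assoc _ _ _).symm

theorem IsProperCone.tendsto_norm_zero_of_KNonneg_sub_sum (hK : IsProperCone K)
    {P : ℕ → Matrix (Fin n) (Fin n) ℝ} {B : Matrix (Fin n) (Fin n) ℝ}
    (hP : ∀ j, KNonneg K (P j)) (hB : ∀ m, KNonneg K (B - ∑ j ∈ range m, P j)) :
    Tendsto (fun j => ‖P j‖) atTop (𝓝 0) := by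
  obtain ⟨f, C, -, hC, -, hf, -⟩ := hK.exists_functional_norm_le
  have hf_nonneg : ∀ M, KNonneg K M → 0 ≤ f M := fun M hM =>
    nonneg_of_mul_nonneg_right ((norm_nonneg _).trans (hf M hM)) hC
  -- the series `∑ f (P j)` has nonnegative terms and partial sums bounded by `f B`
  have hsum : Summable fun j => f (P j) := by
    refine summable_of_sum_range_le (fun j => hf_nonneg _ (hP j)) (c := f B) fun m => ?_
    have := hf_nonneg _ (hB m)
    rwa [map_sub, map_sum, sub_nonneg] at this
  exact squeeze_zero (fun j => norm_nonneg _) (fun j => hf _ (hP j))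
    (by simpa using hsum.tendsto_atTop_zero.const_mul C)

theorem KNonneg.mul_pow_sub_pow_mul (hK : IsProperCone K)
    {B X Y T T' : Matrix (Fin n) (Fin n) ℝ} (hT : KNonneg K T) (hT' : KNonneg K T')
    (hXY : KNonneg K (X - Y)) (hTB : T * B = B - X) (hBT' : B * T' = B - Y) (m : ℕ) :
    KNonneg K (B * T' ^ m - T ^ m * B) := by
  induction m with
  | zero => exact fun x hx => by simpa using hK.2.2.1 0 le_rfl x hx
  | succ m ih =>
    have hstep : B * T' ^ (m + 1) - T ^ (m + 1) * B =
        (X - Y) * T' ^ m + T * (B * T' ^ m - T ^ m * B) := by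
      rw [pow_succ', pow_succ', ← mul_assoc, hBT', mul_sub, ← mul_assoc T B, hTB, mul_assoc]
      noncomm_ring
    rw [hstep]
    exact (hXY.mul (hT'.pow m)).add hK (hT.mul ih)

end MatrixCone

section Splitting

variable {n : ℕ} {K : Set (Fin n → ℝ)} {A U V : Matrix (Fin n) (Fin n) ℝ}

theorem inv_mul_mul_inv_eq_inv_sub_inv (hA : IsUnit A) (hU : IsUnit U) (h : A = U - V) :
    U⁻¹ * V * A⁻¹ = A⁻¹ - U⁻¹ := by
  rw [show V = U - A by rw [h, sub_sub_cancel], mul_sub, sub_mul,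
    nonsing_inv_mul _ ((isUnit_iff_isUnit_det U).1 hU), one_mul,
    mul_nonsing_inv_cancel_right _ _ ((isUnit_iff_isUnit_det A).1 hA)]

theorem inv_mul_mul_mul_inv_eq_inv_sub_inv (hA : IsUnit A) (hU : IsUnit U) (h : A = U - V) :
    A⁻¹ * (V * U⁻¹) = A⁻¹ - U⁻¹ := by
  rw [show V = U - A by rw [h, sub_sub_cancel], sub_mul, mul_sub,
    mul_nonsing_inv _ ((isUnit_iff_isUnit_det U).1 hU), mul_one,
    nonsing_inv_mul_cancel_left _ _ ((isUnit_iff_isUnit_det A).1 hA)]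

theorem inv_sub_sum_inv_mul_pow (hA : IsUnit A) (hU : IsUnit U) (h : A = U - V) (m : ℕ) :
    A⁻¹ - ∑ j ∈ range m, U⁻¹ * (V * U⁻¹) ^ j = A⁻¹ * (V * U⁻¹) ^ m := by
  have hterm (j : ℕ) :
      U⁻¹ * (V * U⁻¹) ^ j = A⁻¹ * (V * U⁻¹) ^ j - A⁻¹ * (V * U⁻¹) ^ (j + 1) := by
    rw [pow_succ', ← mul_assoc, inv_mul_mul_mul_inv_eq_inv_sub_inv hA hU h, sub_mul,
      sub_sub_cancel]
  rw [Finset.sum_congr rfl fun j _ => hterm j, Finset.sum_range_sub', pow_zero, mul_one,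
    sub_sub_cancel]

theorem KWeakRegularSplittingII.tendsto_norm_inv_mul_pow (hK : IsProperCone K)
    (hA : KMonotone K A) (h : KWeakRegularSplittingII K A U V) :
    Tendsto (fun m => ‖(U⁻¹ * V) ^ m‖) atTop (𝓝 0) := by
  obtain ⟨hsplit, hU, hUinv, hT⟩ := h
  have hP := hK.tendsto_norm_zero_of_KNonneg_sub_sum (fun j => hUinv.mul (hT.pow j)) fun m => by
    rw [inv_sub_sum_inv_mul_pow hA.1 hU hsplit]
    exact hA.2.mul (hT.pow m)
  refine squeeze_zero (fun _ => norm_nonneg _) (fun m => ?_) (by simpa using hP.mul_const ‖U‖)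
  calc ‖(U⁻¹ * V) ^ m‖ = ‖U⁻¹ * (V * U⁻¹) ^ m * U‖ := by
        rw [← mul_pow_mul, nonsing_inv_mul_cancel_right _ _ ((isUnit_iff_isUnit_det U).1 hU)]
    _ ≤ ‖U⁻¹ * (V * U⁻¹) ^ m‖ * ‖U‖ := norm_mul_le _ _

theorem KWeakRegularSplittingII.specRad_lt_one (hK : IsProperCone K) (hA : KMonotone K A)
    (h : KWeakRegularSplittingII K A U V) : specRad (U⁻¹ * V) < 1 :=
  specRad_lt_one_of_tendsto_norm_pow (h.tendsto_norm_inv_mul_pow hK hA)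

theorem exists_norm_pow_le_of_KNonneg_inv_sub_inv (hK : IsProperCone K)
    {U₁ V₁ U₂ V₂ : Matrix (Fin n) (Fin n) ℝ} (hA : KMonotone K A)
    (h₁ : KWeakRegularSplittingI K A U₁ V₁) (h₂ : KWeakRegularSplittingII K A U₂ V₂)
    (hU : KNonneg K (U₁⁻¹ - U₂⁻¹)) :
    ∃ c : ℝ, ∀ m : ℕ, ‖(U₁⁻¹ * V₁) ^ m‖ ≤ c * ‖(U₂⁻¹ * V₂) ^ m‖ := by
  obtain ⟨hsplit₁, hU₁, -, hT⟩ := h₁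
  obtain ⟨hsplit₂, hU₂, -, hT'⟩ := h₂
  obtain ⟨c, hc, hcomp⟩ := hK.exists_norm_le_of_KNonneg_sub
  refine ⟨c * ‖A⁻¹‖ * ‖U₂‖ * ‖U₂⁻¹‖ * ‖A‖, fun m => ?_⟩
  have hD := KNonneg.mul_pow_sub_pow_mul hK hT hT' hU
    (inv_mul_mul_inv_eq_inv_sub_inv hA.1 hU₁ hsplit₁)
    (inv_mul_mul_mul_inv_eq_inv_sub_inv hA.1 hU₂ hsplit₂) m
  calc ‖(U₁⁻¹ * V₁) ^ m‖ = ‖(U₁⁻¹ * V₁) ^ m * A⁻¹ * A‖ := by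
        rw [nonsing_inv_mul_cancel_right _ _ ((isUnit_iff_isUnit_det A).1 hA.1)]
    _ ≤ ‖(U₁⁻¹ * V₁) ^ m * A⁻¹‖ * ‖A‖ := norm_mul_le _ _
    _ ≤ c * ‖A⁻¹ * (V₂ * U₂⁻¹) ^ m‖ * ‖A‖ := by
        gcongr
        exact hcomp _ _ ((hT.pow m).mul hA.2) hD
    _ = c * ‖A⁻¹ * (U₂ * ((U₂⁻¹ * V₂) ^ m * U₂⁻¹))‖ * ‖A‖ := by
        rw [mul_pow_mul, mul_nonsing_inv_cancel_left _ _ ((isUnit_iff_isUnit_det U₂).1 hU₂)]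
    _ ≤ c * (‖A⁻¹‖ * (‖U₂‖ * (‖(U₂⁻¹ * V₂) ^ m‖ * ‖U₂⁻¹‖))) * ‖A‖ := by
        gcongr
        exact norm_mul_le_of_le le_rfl (norm_mul_le_of_le le_rfl (norm_mul_le _ _))
    _ = c * ‖A⁻¹‖ * ‖U₂‖ * ‖U₂⁻¹‖ * ‖A‖ * ‖(U₂⁻¹ * V₂) ^ m‖ := by ring

end Splitting

theorem stmt_1 {n : ℕ} (K : Set (Fin n → ℝ)) (hK : IsProperCone K)
    (A U₁ V₁ U₂ V₂ : Matrix (Fin n) (Fin n) ℝ)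
    (hmono : KMonotone K A)
    (h₁ : KWeakRegularSplittingI K A U₁ V₁)
    (h₂ : KWeakRegularSplittingII K A U₂ V₂)
    (hU : KNonneg K (U₁⁻¹ - U₂⁻¹)) :
    specRad (U₁⁻¹ * V₁) ≤ specRad (U₂⁻¹ * V₂) ∧ specRad (U₂⁻¹ * V₂) < 1 := by
  obtain ⟨c, hc⟩ := exists_norm_pow_le_of_KNonneg_inv_sub_inv hK hmono h₁ h₂ hU
  exact ⟨specRad_le_of_norm_pow_le hc, h₂.specRad_lt_one hK hmono⟩
end

section
/- Let A, U, F ∈ ℝ^{n×n} be invertible with A = U − V and U = F − G. If V F⁻¹ G = G F⁻¹ V, then for every integer s ≥ 1 one has T̂_s = A T_s A⁻¹ (the matrices T_s and T̂_s are similar), and consequently ρ(T̂_s) = ρ(T_s). -/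
open Matrix Finset Filter

/-! With `A = F - (G + V)`, the commutation `V F⁻¹ G = G F⁻¹ V` is exactly what makes
`A (F⁻¹ X) = (X F⁻¹) A` for both `X = G` and `X = V`. Since `T_s` and `T̂_s` are built from
`F⁻¹ G, F⁻¹ V` and `G F⁻¹, V F⁻¹` by the same sums and products, `A T_s = T̂_s A`, and
similar matrices have the same spectrum. -/

theorem Matrix.semiconjBy_sub_inv_mul {m R : Type*} [Fintype m] [DecidableEq m] [CommRing R]
    {F W X : Matrix m m R} (hF : IsUnit F) (h : W * F⁻¹ * X = X * F⁻¹ * W) :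
    SemiconjBy (F - W) (F⁻¹ * X) (X * F⁻¹) := by
  have hFd := (isUnit_iff_isUnit_det F).mp hF
  rw [SemiconjBy, sub_mul, mul_sub, ← mul_assoc, mul_nonsing_inv F hFd, mul_assoc X,
    nonsing_inv_mul F hFd, one_mul, mul_one, ← mul_assoc, h, mul_assoc]

theorem SemiconjBy.pow_add_geom_sum_mul {R : Type*} [Semiring R] {a x y p q : R}
    (hxy : SemiconjBy a x y) (hpq : SemiconjBy a p q) (s : ℕ) :
    SemiconjBy a (x ^ s + (∑ j ∈ range s, x ^ j) * p) (y ^ s + (∑ j ∈ range s, y ^ j) * q) := by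
  have hsum : SemiconjBy a (∑ j ∈ range s, x ^ j) (∑ j ∈ range s, y ^ j) := by
    rw [SemiconjBy, mul_sum, sum_mul]
    exact sum_congr rfl fun j _ ↦ hxy.pow_right j
  exact (hxy.pow_right s).add_right (hsum.mul_right hpq)

theorem semiconjBy_twoStageT {n : ℕ} {F G V : Matrix (Fin n) (Fin n) ℝ} (hF : IsUnit F)
    (hcomm : V * F⁻¹ * G = G * F⁻¹ * V) (s : ℕ) :
    SemiconjBy (F - G - V) (twoStageT F G V s) (twoStageThat F G V s) := by
  rw [sub_sub]
  refine SemiconjBy.pow_add_geom_sum_mul ?_ ?_ s <;>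
    refine Matrix.semiconjBy_sub_inv_mul hF ?_ <;>
    simp only [add_mul, mul_add, hcomm]

theorem specRad_conj {n : ℕ} {A : Matrix (Fin n) (Fin n) ℝ} (hA : IsUnit A)
    (T : Matrix (Fin n) (Fin n) ℝ) : specRad (A * T * A⁻¹) = specRad T := by
  obtain ⟨u, rfl⟩ := hA
  let f : Matrix (Fin n) (Fin n) ℝ →+* Matrix (Fin n) (Fin n) ℂ := Complex.ofRealHom.mapMatrix
  have hspec := spectrum.units_conjugate (R := ℂ) (a := f T) (u := Units.map f.toMonoidHom u)
  rw [Units.coe_map, Units.coe_map_inv, RingHom.toMonoidHom_eq_coe, MonoidHom.coe_coe,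
    ← map_mul, ← map_mul] at hspec
  rw [specRad, specRad, ← coe_units_inv]
  exact congrArg (fun S ↦ sSup ((‖·‖) '' S)) hspec

theorem stmt_4_general {n : ℕ} (A U V F G : Matrix (Fin n) (Fin n) ℝ)
    (hA : IsUnit A) (hF : IsUnit F)
    (hAUV : A = U - V) (hUFG : U = F - G)
    (hcomm : V * F⁻¹ * G = G * F⁻¹ * V) :
    ∀ s : ℕ, 1 ≤ s →
      twoStageThat F G V s = A * twoStageT F G V s * A⁻¹ ∧
      specRad (twoStageThat F G V s) = specRad (twoStageT F G V s) := by
  intro s _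
  have hsemi : SemiconjBy A (twoStageT F G V s) (twoStageThat F G V s) := by
    rw [hAUV, hUFG]
    exact semiconjBy_twoStageT hF hcomm s
  have hsim : twoStageThat F G V s = A * twoStageT F G V s * A⁻¹ := by
    rw [hsemi.eq, mul_assoc, mul_nonsing_inv A ((isUnit_iff_isUnit_det A).mp hA), mul_one]
  exact ⟨hsim, hsim ▸ specRad_conj hA _⟩

theorem stmt_4 {n : ℕ} (A U V F G : Matrix (Fin n) (Fin n) ℝ)
    (hA : IsUnit A) (hU : IsUnit U) (hF : IsUnit F)
    (hAUV : A = U - V) (hUFG : U = F - G)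
    (hcomm : V * F⁻¹ * G = G * F⁻¹ * V) :
    ∀ s : ℕ, 1 ≤ s →
      twoStageThat F G V s = A * twoStageT F G V s * A⁻¹ ∧
      specRad (twoStageThat F G V s) = specRad (twoStageT F G V s) :=
  stmt_4_general A U V F G hA hF hAUV hUFG hcomm
end

section
/- Let A, U, F ∈ ℝ^{n×n} be invertible with A = U − V and U = F − G. If V F⁻¹ G = G F⁻¹ V, then for every integer s ≥ 1 one has T̂_s = I − (I − (GF⁻¹)^s)(I − V U⁻¹). -/
open Matrix Finset Filter

/-! With `M = GF⁻¹` one has `1 - M = UF⁻¹`, and the commutation hypothesis is equivalent to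
`UF⁻¹V = VF⁻¹U`, so `(1 - M)VU⁻¹ = VF⁻¹`. Since `1 - Mˢ = (∑_{j<s} Mʲ)(1 - M)`, the right-hand side
`Mˢ + (1 - Mˢ)VU⁻¹` is `T̂_s`. -/

namespace Matrix

variable {ι R : Type*} [Fintype ι] [DecidableEq ι] [CommRing R]

theorem sub_mul_nonsing_inv_mul_comm {F G V : Matrix ι ι R} (hF : IsUnit F.det)
    (hcomm : V * F⁻¹ * G = G * F⁻¹ * V) :
    (F - G) * F⁻¹ * V = V * F⁻¹ * (F - G) := by
  rw [sub_mul, sub_mul, mul_sub, mul_nonsing_inv _ hF, one_mul,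
    nonsing_inv_mul_cancel_right _ _ hF, hcomm]

theorem one_sub_mul_nonsing_inv_mul_eq {F G V : Matrix ι ι R} (hF : IsUnit F.det)
    (hFG : IsUnit (F - G).det) (hcomm : V * F⁻¹ * G = G * F⁻¹ * V) :
    (1 - G * F⁻¹) * (V * (F - G)⁻¹) = V * F⁻¹ := by
  have hsplit : 1 - G * F⁻¹ = (F - G) * F⁻¹ := by rw [sub_mul, mul_nonsing_inv _ hF]
  rw [hsplit, ← mul_assoc, sub_mul_nonsing_inv_mul_comm hF hcomm,
    mul_nonsing_inv_cancel_right _ _ hFG]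

end Matrix

theorem stmt_5_general {n : ℕ} (U V F G : Matrix (Fin n) (Fin n) ℝ)
    (hU : IsUnit U) (hF : IsUnit F)
    (hUFG : U = F - G)
    (hcomm : V * F⁻¹ * G = G * F⁻¹ * V) :
    ∀ s : ℕ, 1 ≤ s →
      twoStageThat F G V s = 1 - (1 - (G * F⁻¹) ^ s) * (1 - V * U⁻¹) := by
  intro s _
  subst hUFG
  have hstep : (1 - G * F⁻¹) * (V * (F - G)⁻¹) = V * F⁻¹ :=
    one_sub_mul_nonsing_inv_mul_eq (F.isUnit_iff_isUnit_det.mp hF)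
      ((F - G).isUnit_iff_isUnit_det.mp hU) hcomm
  calc twoStageThat F G V s
      = (G * F⁻¹) ^ s
          + (∑ j ∈ range s, (G * F⁻¹) ^ j) * (1 - G * F⁻¹) * (V * (F - G)⁻¹) := by
        rw [twoStageThat, mul_assoc, hstep]
    _ = (G * F⁻¹) ^ s + (1 - (G * F⁻¹) ^ s) * (V * (F - G)⁻¹) := by
        rw [geom_sum_mul_neg]
    _ = 1 - (1 - (G * F⁻¹) ^ s) * (1 - V * (F - G)⁻¹) := by noncomm_ring

theorem stmt_5 {n : ℕ} (A U V F G : Matrix (Fin n) (Fin n) ℝ)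
    (hA : IsUnit A) (hU : IsUnit U) (hF : IsUnit F)
    (hAUV : A = U - V) (hUFG : U = F - G)
    (hcomm : V * F⁻¹ * G = G * F⁻¹ * V) :
    ∀ s : ℕ, 1 ≤ s →
      twoStageThat F G V s = 1 - (1 - (G * F⁻¹) ^ s) * (1 - V * U⁻¹) :=
  stmt_5_general U V F G hU hF hUFG hcomm
end
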